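/- Let h₁, h₂, h₃ be the automorphisms of the finite abelian group A = ℤ³/(2ℤ × 2ℤ × 8ℤ) ≅ ℤ/2 × ℤ/2 × ℤ/8 induced (via conjugation by D = diag(2,2,8)) by the integer matrices g₁ = ![![1,0,0],![2,1,4],![1,0,1]], g₂ = ![![1,2,4],![2,1,4],![-1,-1,-3]], g₃ = ![![0,1,0],![1,0,0],![0,0,1]], each of which satisfies gᵀ·Q₂·g = Q₂ for Q₂ = ![![0,1,0],![1,0,0],![0,0,-4]]. Then h₁² = h₂² = h₃² = id, the composite h₁h₃ has order exactly 4, (h₁h₃)² = h₂, and h₁(h₁h₃)h₁ = (h₁h₃)⁻¹. -/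

import Mathlib

open Matrix

namespace Stmt4

/-- A Gram matrix (up to sign of the rank-one summand) of the lattice `H ⊕ ⟨4⟩`. -/
def Q : Matrix (Fin 3) (Fin 3) ℤ := !![0, 1, 0; 1, 0, 0; 0, 0, -4]

def g1 : Matrix (Fin 3) (Fin 3) ℤ := !![1, 0, 0; 2, 1, 4; 1, 0, 1]

def g2 : Matrix (Fin 3) (Fin 3) ℤ := !![1, 2, 4; 2, 1, 4; -1, -1, -3]

def g3 : Matrix (Fin 3) (Fin 3) ℤ := !![0, 1, 0; 1, 0, 0; 0, 0, 1]

/-- `D = diag(2, 2, 8)`. -/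
def D : Matrix (Fin 3) (Fin 3) ℤ := Matrix.diagonal ![2, 2, 8]

/-- The subgroup `Λ = 2ℤ × 2ℤ × 8ℤ` of `ℤ³`. -/
def Λ : AddSubgroup (Fin 3 → ℤ) :=
  AddSubgroup.pi Set.univ fun i => AddSubgroup.zmultiples (![(2 : ℤ), 2, 8] i)

/-- The finite abelian group `A = ℤ³/Λ`. -/
abbrev A : Type := (Fin 3 → ℤ) ⧸ Λ

/-! ### Auxiliary material -/

lemma mem_Lambda_iff (v : Fin 3 → ℤ) : v ∈ Λ ↔ ∀ i, (![(2 : ℤ), 2, 8] i) ∣ v i := by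
  constructor
  · intro h i
    exact Int.mem_zmultiples_iff.mp (h i (Set.mem_univ i))
  · intro h i _
    exact Int.mem_zmultiples_iff.mpr (h i)

lemma D_mulVec_mem (w : Fin 3 → ℤ) : D.mulVec w ∈ Λ := by
  rw [mem_Lambda_iff]
  intro i
  rw [D, Matrix.mulVec_diagonal]
  exact Dvd.intro _ rfl

lemma exists_eq_D_mulVec (v : Fin 3 → ℤ) (hv : v ∈ Λ) : ∃ w, v = D.mulVec w := by
  rw [mem_Lambda_iff] at hv
  choose k hk using hv
  refine ⟨k, funext fun i => ?_⟩
  rw [D, Matrix.mulVec_diagonal, ← hk i]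

lemma preserves (M g : Matrix (Fin 3) (Fin 3) ℤ) (hMD : M * D = D * g) :
    ∀ v ∈ Λ, M.mulVec v ∈ Λ := by
  intro v hv
  obtain ⟨w, rfl⟩ := exists_eq_D_mulVec v hv
  rw [Matrix.mulVec_mulVec, hMD, ← Matrix.mulVec_mulVec]
  exact D_mulVec_mem _

/-- The endomorphism of `A` induced by a matrix preserving `Λ`. -/
def ind (M : Matrix (Fin 3) (Fin 3) ℤ) (h : ∀ v ∈ Λ, M.mulVec v ∈ Λ) : A →+ A :=
  QuotientAddGroup.lift Λ
    ((QuotientAddGroup.mk' Λ).comp (M.mulVecLin.toAddMonoidHom))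
    (fun v hv => by
      simpa [QuotientAddGroup.eq_zero_iff] using h v hv)

lemma ind_mk (M : Matrix (Fin 3) (Fin 3) ℤ) (h : ∀ v ∈ Λ, M.mulVec v ∈ Λ)
    (v : Fin 3 → ℤ) :
    ind M h (QuotientAddGroup.mk v) = QuotientAddGroup.mk (M.mulVec v) := rfl

/-- The automorphism of `A` induced by a matrix with integral inverse, both
preserving `Λ`. -/
def indAut (M N : Matrix (Fin 3) (Fin 3) ℤ) (hMN : M * N = 1) (hNM : N * M = 1)
    (hM : ∀ v ∈ Λ, M.mulVec v ∈ Λ) (hN : ∀ v ∈ Λ, N.mulVec v ∈ Λ) : AddAut A where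
  toFun := ind M hM
  invFun := ind N hN
  left_inv := by
    intro x
    induction x using QuotientAddGroup.induction_on with
    | H v => rw [ind_mk, ind_mk, Matrix.mulVec_mulVec, hNM, Matrix.one_mulVec]
  right_inv := by
    intro x
    induction x using QuotientAddGroup.induction_on with
    | H v => rw [ind_mk, ind_mk, Matrix.mulVec_mulVec, hMN, Matrix.one_mulVec]
  map_add' := (ind M hM).map_add

lemma indAut_mk (M N : Matrix (Fin 3) (Fin 3) ℤ) (hMN : M * N = 1) (hNM : N * M = 1)
    (hM : ∀ v ∈ Λ, M.mulVec v ∈ Λ) (hN : ∀ v ∈ Λ, N.mulVec v ∈ Λ) (v : Fin 3 → ℤ) :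
    indAut M N hMN hNM hM hN (QuotientAddGroup.mk v)
      = QuotientAddGroup.mk (M.mulVec v) := rfl

/-- If `f` acts on `A` by `Mf` and `g` by `Mg`, then `f * g` acts by `Mf * Mg`. -/
lemma mul_act {f g : AddAut A} {Mf Mg : Matrix (Fin 3) (Fin 3) ℤ}
    (hf : ∀ v : Fin 3 → ℤ,
      f (QuotientAddGroup.mk v) = QuotientAddGroup.mk (Mf.mulVec v))
    (hg : ∀ v : Fin 3 → ℤ,
      g (QuotientAddGroup.mk v) = QuotientAddGroup.mk (Mg.mulVec v)) :
    ∀ v : Fin 3 → ℤ,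
      (f + g) (QuotientAddGroup.mk v)
        = QuotientAddGroup.mk ((Mf * Mg).mulVec v) := by
  intro v
  have : (f + g) (QuotientAddGroup.mk v) = f (g (QuotientAddGroup.mk v)) := rfl
  rw [this, hg, hf, Matrix.mulVec_mulVec]

/-- Main extensionality criterion: if `f` acts by `Mf`, `g` by `Mg`, and
`Mf = Mg + D * C`, then `f = g`. -/
lemma aut_eq {f g : AddAut A} {Mf Mg C : Matrix (Fin 3) (Fin 3) ℤ}
    (hf : ∀ v : Fin 3 → ℤ,
      f (QuotientAddGroup.mk v) = QuotientAddGroup.mk (Mf.mulVec v))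
    (hg : ∀ v : Fin 3 → ℤ,
      g (QuotientAddGroup.mk v) = QuotientAddGroup.mk (Mg.mulVec v))
    (hC : Mf = Mg + D * C) : f = g := by
  apply AddEquiv.ext
  intro x
  induction x using QuotientAddGroup.induction_on with
  | H v =>
    rw [hf, hg, hC, Matrix.add_mulVec, ← Matrix.mulVec_mulVec]
    have h0 : QuotientAddGroup.mk (s := Λ) (D.mulVec (C.mulVec v)) = 0 :=
      (QuotientAddGroup.eq_zero_iff _).mpr (D_mulVec_mem _)
    calc (QuotientAddGroup.mk (Mg.mulVec v + D.mulVec (C.mulVec v)) : A)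
        = QuotientAddGroup.mk (Mg.mulVec v)
            + QuotientAddGroup.mk (D.mulVec (C.mulVec v)) := rfl
      _ = QuotientAddGroup.mk (Mg.mulVec v) := by rw [h0, add_zero]

lemma one_act : ∀ v : Fin 3 → ℤ,
    (0 : AddAut A) (QuotientAddGroup.mk v)
      = QuotientAddGroup.mk ((1 : Matrix (Fin 3) (Fin 3) ℤ).mulVec v) := by
  intro v
  rw [Matrix.one_mulVec]
  rfl

/-! ### The concrete matrices -/

def M1 : Matrix (Fin 3) (Fin 3) ℤ := !![1, 0, 0; 2, 1, 1; 4, 0, 1]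
def N1 : Matrix (Fin 3) (Fin 3) ℤ := !![1, 0, 0; 2, 1, -1; -4, 0, 1]
def M2 : Matrix (Fin 3) (Fin 3) ℤ := !![1, 2, 1; 2, 1, 1; -4, -4, -3]
def M3 : Matrix (Fin 3) (Fin 3) ℤ := !![0, 1, 0; 1, 0, 0; 0, 0, 1]

lemma hM1D : M1 * D = D * g1 := by decide
lemma hM2D : M2 * D = D * g2 := by decide
lemma hM3D : M3 * D = D * g3 := by decide
lemma hN1D : N1 * D = D * !![1, 0, 0; 2, 1, -4; -1, 0, 1] := by decide
lemma hM1N1 : M1 * N1 = 1 := by decide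
lemma hN1M1 : N1 * M1 = 1 := by decide
lemma hM2M2 : M2 * M2 = 1 := by decide
lemma hM3M3 : M3 * M3 = 1 := by decide

theorem statement4 :
    (g1ᵀ * Q * g1 = Q ∧ g2ᵀ * Q * g2 = Q ∧ g3ᵀ * Q * g3 = Q) ∧
    Nonempty (A ≃+ ZMod 2 × ZMod 2 × ZMod 8) ∧
    ∃ M1 M2 M3 : Matrix (Fin 3) (Fin 3) ℤ,
      -- `Mᵢ` is the (integral) matrix `D·gᵢ·D⁻¹`
      M1 * D = D * g1 ∧ M2 * D = D * g2 ∧ M3 * D = D * g3 ∧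
      -- the automorphisms `hᵢ` of `A` induced by the `Mᵢ = D·gᵢ·D⁻¹`
      ∃ h1 h2 h3 : AddAut A,
        (∀ v : Fin 3 → ℤ,
            h1 (QuotientAddGroup.mk v) = QuotientAddGroup.mk (M1.mulVec v)) ∧
        (∀ v : Fin 3 → ℤ,
            h2 (QuotientAddGroup.mk v) = QuotientAddGroup.mk (M2.mulVec v)) ∧
        (∀ v : Fin 3 → ℤ,
            h3 (QuotientAddGroup.mk v) = QuotientAddGroup.mk (M3.mulVec v)) ∧
        -- `h₁² = h₂² = h₃² = id`
        2 • h1 = 0 ∧ 2 • h2 = 0 ∧ 2 • h3 = 0 ∧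
        -- `h₁h₃` has order exactly 4
        addOrderOf (h1 + h3) = 4 ∧
        -- `(h₁h₃)² = h₂`
        2 • (h1 + h3) = h2 ∧
        -- `h₁(h₁h₃)h₁ = (h₁h₃)⁻¹`
        h1 + (h1 + h3) + h1 = -(h1 + h3) := by
  refine ⟨⟨by decide, by decide, by decide⟩, ?_, ?_⟩
  · -- the isomorphism A ≃+ ZMod 2 × ZMod 2 × ZMod 8
    refine ⟨?_⟩
    let φ : (Fin 3 → ℤ) →+ ZMod 2 × ZMod 2 × ZMod 8 :=
      { toFun := fun v => ((v 0 : ZMod 2), (v 1 : ZMod 2), (v 2 : ZMod 8))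
        map_zero' := by simp
        map_add' := fun v w => by simp [Prod.ext_iff] }
    have hker : Λ = φ.ker := by
      ext v
      rw [AddMonoidHom.mem_ker, mem_Lambda_iff]
      constructor
      · intro h
        have h0 := h 0; have h1 := h 1; have h2 := h 2
        simp only [Matrix.cons_val_zero, Matrix.cons_val_one, Matrix.head_cons,
          Matrix.cons_val_two, Matrix.tail_cons] at h0 h1 h2
        simp only [φ, AddMonoidHom.coe_mk, ZeroHom.coe_mk, Prod.ext_iff,
          Prod.fst_zero, Prod.snd_zero]
        exact ⟨(ZMod.intCast_zmod_eq_zero_iff_dvd _ _).mpr h0,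
          (ZMod.intCast_zmod_eq_zero_iff_dvd _ _).mpr h1,
          (ZMod.intCast_zmod_eq_zero_iff_dvd _ _).mpr h2⟩
      · intro h i
        simp only [φ, AddMonoidHom.coe_mk, ZeroHom.coe_mk, Prod.ext_iff,
          Prod.fst_zero, Prod.snd_zero] at h
        fin_cases i
        · exact (ZMod.intCast_zmod_eq_zero_iff_dvd _ 2).mp h.1
        · exact (ZMod.intCast_zmod_eq_zero_iff_dvd _ 2).mp h.2.1
        · exact (ZMod.intCast_zmod_eq_zero_iff_dvd _ 8).mp h.2.2
    have hsurj : Function.Surjective φ := by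
      rintro ⟨a, b, c⟩
      obtain ⟨x, rfl⟩ := ZMod.intCast_surjective a
      obtain ⟨y, rfl⟩ := ZMod.intCast_surjective b
      obtain ⟨z, rfl⟩ := ZMod.intCast_surjective c
      exact ⟨![x, y, z], by simp [φ]⟩
    exact (QuotientAddGroup.quotientAddEquivOfEq hker).trans
      (QuotientAddGroup.quotientKerEquivOfSurjective φ hsurj)
  · -- the automorphisms and the dihedral relations
    have pM1 := preserves M1 g1 hM1D
    have pN1 := preserves N1 _ hN1D
    have pM2 := preserves M2 g2 hM2D
    have pM3 := preserves M3 g3 hM3D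
    refine ⟨M1, M2, M3, hM1D, hM2D, hM3D, ?_⟩
    set h1 : AddAut A := indAut M1 N1 hM1N1 hN1M1 pM1 pN1 with h1_def
    set h2 : AddAut A := indAut M2 M2 hM2M2 hM2M2 pM2 pM2 with h2_def
    set h3 : AddAut A := indAut M3 M3 hM3M3 hM3M3 pM3 pM3 with h3_def
    have a1 : ∀ v : Fin 3 → ℤ,
        h1 (QuotientAddGroup.mk v) = QuotientAddGroup.mk (M1.mulVec v) :=
      fun v => rfl
    have a2 : ∀ v : Fin 3 → ℤ,
        h2 (QuotientAddGroup.mk v) = QuotientAddGroup.mk (M2.mulVec v) :=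
      fun v => rfl
    have a3 : ∀ v : Fin 3 → ℤ,
        h3 (QuotientAddGroup.mk v) = QuotientAddGroup.mk (M3.mulVec v) :=
      fun v => rfl
    -- actions of products
    have a11 := mul_act a1 a1
    have a22 := mul_act a2 a2
    have a33 := mul_act a3 a3
    have a13 := mul_act a1 a3
    have a1313 := mul_act a13 a13
    have a113131 := mul_act (mul_act (mul_act a1 a13) a1) a13
    -- squares are trivial
    have sq1 : 2 • h1 = 0 := by
      rw [two_nsmul]
      exact aut_eq a11 one_act (C := !![0,0,0; 4,0,1; 1,0,0]) (by decide)
    have sq2 : 2 • h2 = 0 := by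
      rw [two_nsmul]
      exact aut_eq a22 one_act (C := 0) (by decide)
    have sq3 : 2 • h3 = 0 := by
      rw [two_nsmul]
      exact aut_eq a33 one_act (C := 0) (by decide)
    -- (h1 h3)^2 = h2
    have hp2 : 2 • (h1 + h3) = h2 := by
      rw [two_nsmul]
      exact aut_eq a1313 a2 (C := !![0,0,0; 0,4,1; 1,2,1]) (by decide)
    -- (h1 h3)^4 = 1
    have hp4 : 4 • (h1 + h3) = 0 := by
      rw [show (4 : ℕ) = 2 * 2 from rfl, mul_nsmul, hp2, sq2]
    -- h2 ≠ 1
    have h2ne : h2 ≠ 0 := by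
      intro h
      have heq : (QuotientAddGroup.mk (M2.mulVec ![1, 0, 0]) : A)
          = QuotientAddGroup.mk ![1, 0, 0] := by
        rw [← a2 ![1, 0, 0], h]; rfl
      rw [QuotientAddGroup.eq, mem_Lambda_iff] at heq
      have h2' := heq 2
      have hval : ((-(M2.mulVec ![1, 0, 0]) + ![1, 0, 0] : Fin 3 → ℤ)) (2 : Fin 3)
          = 4 := by decide
      rw [hval, show (![(2 : ℤ), 2, 8] (2 : Fin 3)) = 8 from rfl] at h2'
      omega
    -- order of h1 * h3 is 4
    have hord : addOrderOf (h1 + h3) = 4 := by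
      have hnot : ¬ 2 ^ 1 • (h1 + h3) = 0 := by
        rw [pow_one, hp2]; exact h2ne
      have hfin : 2 ^ (1 + 1) • (h1 + h3) = 0 := by
        norm_num; exact hp4
      have := addOrderOf_eq_prime_pow (p := 2) (n := 1) hnot hfin
      norm_num at this
      exact this
    -- h1 (h1 h3) h1 = (h1 h3)⁻¹
    have hrel : h1 + (h1 + h3) + h1 = -(h1 + h3) := by
      apply eq_neg_of_add_eq_zero_left
      exact aut_eq a113131 one_act
        (C := !![0,4,1; 4,40,9; 1,9,2]) (by decide)
    exact ⟨h1, h2, h3, a1, a2, a3, sq1, sq2, sq3, hord, hp2, hrel⟩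

end Stmt4
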